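/- arXiv:2407.15607 — 5 statements merged into one kernel-verified Lean document; each statement's English description precedes it below -/
import Mathlib

section
/- Let p : T ⥤ B be a Grothendieck opfibration such that each reindexing functor u_! preserves initial objects. If B has an initial object 0 and the fiber T_0 has an initial object 0̄, then 0̄ is an initial object of the total category T. -/
open CategoryTheory

universe v₁ v₂ u₁ u₂

/-- A morphism `f : X ⟶ Y` in `T` is cocartesian with respect to `p : T ⥤ B` if for every
morphism `v : p.obj Y ⟶ p.obj Z` in `B` and every `g : X ⟶ Z` above `p.map f ≫ v`, there is a
unique `h : Y ⟶ Z` above `v` with `f ≫ h = g`. -/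
def IsCocartesian {T : Type u₁} {B : Type u₂} [Category.{v₁} T] [Category.{v₂} B]
    (p : T ⥤ B) {X Y : T} (f : X ⟶ Y) : Prop :=
  ∀ ⦃Z : T⦄ (v : p.obj Y ⟶ p.obj Z) (g : X ⟶ Z),
    p.map g = p.map f ≫ v → ∃! h : Y ⟶ Z, p.map h = v ∧ f ≫ h = g


/-- A cloven Grothendieck opfibration: for every object `X` of `T` and every morphism
`u : p.obj X ⟶ B'` of the base, a chosen object `u_!(X)` above `B'` together with a chosen
cocartesian morphism `λ_{u,X} : X ⟶ u_!(X)` above `u`. -/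
structure ClovenOpfib {T : Type u₁} {B : Type u₂} [Category.{v₁} T] [Category.{v₂} B]
    (p : T ⥤ B) where
  push : ∀ (X : T) ⦃B' : B⦄, (p.obj X ⟶ B') → T
  push_over : ∀ (X : T) ⦃B' : B⦄ (u : p.obj X ⟶ B'), p.obj (push X u) = B'
  lam : ∀ (X : T) ⦃B' : B⦄ (u : p.obj X ⟶ B'), X ⟶ push X u
  lam_over : ∀ (X : T) ⦃B' : B⦄ (u : p.obj X ⟶ B'),
    p.map (lam X u) = u ≫ eqToHom (push_over X u).symm
  lam_cocartesian : ∀ (X : T) ⦃B' : B⦄ (u : p.obj X ⟶ B'), IsCocartesian p (lam X u)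

/-- `O` is an initial object of the fiber of `p` over `p.obj O`: for every object `X` in the
same fiber there is a unique morphism `O ⟶ X` lying in the fiber (projecting to the identity,
up to the canonical identification of objects). -/
def FiberInitial {T : Type u₁} {B : Type u₂} [Category.{v₁} T] [Category.{v₂} B]
    (p : T ⥤ B) (O : T) : Prop :=
  ∀ (X : T) (h : p.obj X = p.obj O), ∃! f : O ⟶ X, p.map f = eqToHom h.symm

/-- if `p : T ⥤ B` is a Grothendieck opfibration whose reindexing functors
preserve initial objects, the base has an initial object `0 = p.obj O̅`, and `O̅` is initial
in the fiber over it, then `O̅` is an initial object of the total category `T`. -/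
theorem opfib_initial_total {T : Type u₁} {B : Type u₂}
    [Category.{v₁} T] [Category.{v₂} B] (p : T ⥤ B) (F : ClovenOpfib p)
    (hpres : ∀ (X : T) ⦃B' : B⦄ (u : p.obj X ⟶ B'),
      FiberInitial p X → FiberInitial p (F.push X u))
    (O : T) (hbase : Limits.IsInitial (p.obj O)) (hfib : FiberInitial p O) :
    Nonempty (Limits.IsInitial O) := by
  -- for each X, a canonical morphism O ⟶ X
  have key : ∀ X : T, ∃! g : O ⟶ X, True := by
    intro X
    set u : p.obj O ⟶ p.obj X := hbase.to (p.obj X) with hu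
    have hPinit : FiberInitial p (F.push O u) := hpres O u hfib
    obtain ⟨f, hf, hfuniq⟩ := hPinit X (F.push_over O u).symm
    refine ⟨F.lam O u ≫ f, trivial, ?_⟩
    intro g _
    -- g lies over u
    have hg : p.map g = p.map (F.lam O u) ≫ eqToHom (F.push_over O u) := by
      rw [F.lam_over O u]
      simp only [Category.assoc, eqToHom_trans, eqToHom_refl, Category.comp_id]
      exact hbase.hom_ext _ _
    obtain ⟨h, ⟨hh1, hh2⟩, hhuniq⟩ :=
      F.lam_cocartesian O u (eqToHom (F.push_over O u)) g hg
    have : h = f := hfuniq h (by simpa using hh1)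
    rw [← hh2, this]
  exact ⟨Limits.IsInitial.ofUniqueHom (fun X => (key X).choose)
    (fun X m => (key X).choose_spec.2 m trivial)⟩
end

section
/- Let p : T ⥤ B be a Grothendieck opfibration such that each reindexing functor preserves zero objects. If B has a zero object and the fiber over it has a zero object 0̄, then 0̄ is a zero object of the total category T. -/
open CategoryTheory

universe v₁ v₂ u₁ u₂

/-- `O` is a terminal object of the fiber of `p` over `p.obj O`. -/
def FiberTerminal {T : Type u₁} {B : Type u₂} [Category.{v₁} T] [Category.{v₂} B]
    (p : T ⥤ B) (O : T) : Prop :=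
  ∀ (X : T) (h : p.obj X = p.obj O), ∃! f : X ⟶ O, p.map f = eqToHom h

/-- if `p : T ⥤ B` is a Grothendieck opfibration whose reindexing functors
preserve zero objects, the base has a zero object `p.obj O̅`, and `O̅` is a zero object of the
fiber over it, then `O̅` is a zero object of the total category `T`. -/
theorem opfib_zero_total {T : Type u₁} {B : Type u₂}
    [Category.{v₁} T] [Category.{v₂} B] (p : T ⥤ B) (F : ClovenOpfib p)
    (hpres : ∀ (X : T) ⦃B' : B⦄ (u : p.obj X ⟶ B'),
      (FiberInitial p X ∧ FiberTerminal p X) →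
      (FiberInitial p (F.push X u) ∧ FiberTerminal p (F.push X u)))
    (O : T) (hbase₀ : Limits.IsInitial (p.obj O)) (hbase₁ : Limits.IsTerminal (p.obj O))
    (hfib₀ : FiberInitial p O) (hfib₁ : FiberTerminal p O) :
    Nonempty (Limits.IsInitial O) ∧ Nonempty (Limits.IsTerminal O) := by
  refine ⟨⟨?_⟩, ⟨?_⟩⟩
  · refine Limits.IsInitial.ofUniqueHom
      (fun X => F.lam O (hbase₀.to (p.obj X)) ≫
        ((hpres O (hbase₀.to (p.obj X)) ⟨hfib₀, hfib₁⟩).1 X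
          (F.push_over O (hbase₀.to (p.obj X))).symm).choose) ?_
    intro X m
    set u := hbase₀.to (p.obj X) with hu
    obtain ⟨h, ⟨hover, hfac⟩, -⟩ :=
      F.lam_cocartesian O u (eqToHom (F.push_over O u)) m (hbase₀.hom_ext _ _)
    have hspec := ((hpres O u ⟨hfib₀, hfib₁⟩).1 X (F.push_over O u).symm).choose_spec
    rw [← hfac, hspec.2 h hover]
  · refine Limits.IsTerminal.ofUniqueHom
      (fun X => F.lam X (hbase₁.from (p.obj X)) ≫
        (hfib₁ (F.push X (hbase₁.from (p.obj X)))
          (F.push_over X (hbase₁.from (p.obj X)))).choose) ?_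
    intro X m
    set u := hbase₁.from (p.obj X) with hu
    obtain ⟨h, ⟨hover, hfac⟩, -⟩ :=
      F.lam_cocartesian X u (eqToHom (F.push_over X u)) m (hbase₁.hom_ext _ _)
    have hspec := (hfib₁ (F.push X u) (F.push_over X u)).choose_spec
    rw [← hfac, hspec.2 h hover]
end

section
/- Let p : T ⥤ B be a Waldhausen opfibration with B a Waldhausen category. Then the class of total cofibrations and the class of total weak equivalences in T are each closed under composition. (A morphism f above u is a total cofibration if u is a cofibration in B and f▷ is a cofibration in the fiber over the codomain; similarly for total weak equivalences.) -/
open CategoryTheory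

universe v u v₂ u₂


/-- A Waldhausen structure on a category (requiring only an initial object). -/
structure IsWaldhausen {E : Type u} [Category.{v} E]
    (cof weq : MorphismProperty E) : Prop where
  has_initial : ∃ O : E, Nonempty (Limits.IsInitial O)
  cof_comp : ∀ ⦃X Y Z : E⦄ (f : X ⟶ Y) (g : Y ⟶ Z), cof f → cof g → cof (f ≫ g)
  weq_comp : ∀ ⦃X Y Z : E⦄ (f : X ⟶ Y) (g : Y ⟶ Z), weq f → weq g → weq (f ≫ g)
  cof_iso : ∀ ⦃X Y : E⦄ (f : X ⟶ Y), IsIso f → cof f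
  weq_iso : ∀ ⦃X Y : E⦄ (f : X ⟶ Y), IsIso f → weq f
  cof_initial : ∀ ⦃O X : E⦄, Limits.IsInitial O → ∀ f : O ⟶ X, cof f
  cof_pushout : ∀ ⦃A X Y : E⦄ (f : A ⟶ X) (g : A ⟶ Y), cof f →
    ∃ (P : E) (h : X ⟶ P) (i : Y ⟶ P), IsPushout f g h i ∧ cof i
  gluing : ∀ ⦃A X Y A' X' Y' P P' : E⦄
    (f : A ⟶ X) (g : A ⟶ Y) (h : X ⟶ P) (i : Y ⟶ P)
    (f' : A' ⟶ X') (g' : A' ⟶ Y') (h' : X' ⟶ P') (i' : Y' ⟶ P')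
    (a : A ⟶ A') (x : X ⟶ X') (y : Y ⟶ Y'),
    cof f → cof f' → weq a → weq x → weq y →
    f ≫ x = a ≫ f' → g ≫ y = a ≫ g' →
    ∀ (sq : IsPushout f g h i), IsPushout f' g' h' i' →
    ∀ (w : f ≫ (x ≫ h') = g ≫ (y ≫ i')),
      weq (sq.desc (x ≫ h') (y ≫ i') w)

section

variable {B : Type u} [Category.{v} B] (F : B ⥤ Cat.{v₂, u₂})
variable (cofB weqB : MorphismProperty B)
variable (fcof fweq : ∀ A : B, MorphismProperty (F.obj A))

/-- Total cofibrations on the Grothendieck construction: a morphism `(u, φ)` is a total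
cofibration if `u` is a cofibration in the base and `φ` is a cofibration in the fiber over
the codomain. -/
def totalCof : MorphismProperty (Grothendieck F) :=
  fun _ Y φ => cofB φ.base ∧ fcof Y.base φ.fiber

/-- Total weak equivalences on the Grothendieck construction. -/
def totalWeq : MorphismProperty (Grothendieck F) :=
  fun _ Y φ => weqB φ.base ∧ fweq Y.base φ.fiber

/-- The functor `F : B ⥤ Cat` underlying a Waldhausen opfibration has exact reindexing
functors: each `F.map u` preserves initial objects, cofibrations, weak equivalences, and
pushout squares along cofibrations. -/
structure ExactReindexing : Prop where
  map_initial : ∀ ⦃A A' : B⦄ (u : A ⟶ A') (O : F.obj A),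
    Limits.IsInitial O → Nonempty (Limits.IsInitial ((F.map u).toFunctor.obj O))
  map_cof : ∀ ⦃A A' : B⦄ (u : A ⟶ A') ⦃X Y : F.obj A⦄ (f : X ⟶ Y),
    fcof A f → fcof A' ((F.map u).toFunctor.map f)
  map_weq : ∀ ⦃A A' : B⦄ (u : A ⟶ A') ⦃X Y : F.obj A⦄ (f : X ⟶ Y),
    fweq A f → fweq A' ((F.map u).toFunctor.map f)
  map_pushout : ∀ ⦃A A' : B⦄ (u : A ⟶ A')
    ⦃W X Y P : F.obj A⦄ (f : W ⟶ X) (g : W ⟶ Y) (h : X ⟶ P) (i : Y ⟶ P),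
    fcof A f → IsPushout f g h i →
    IsPushout ((F.map u).toFunctor.map f) ((F.map u).toFunctor.map g) ((F.map u).toFunctor.map h) ((F.map u).toFunctor.map i)

end

/-! The fiber part of `φ ≫ ψ` is `ψ▷ ∘ v_!(φ▷)`, up to the `eqToHom` identifying
`(v ∘ u)_! X` with `v_!(u_! X)`. Exactness of `v_!` puts `v_!(φ▷)` in the class, and the
fiberwise classes contain isomorphisms and are closed under composition. -/

namespace CategoryTheory.Grothendieck

variable {B : Type*} [Category B] {F : B ⥤ Cat} {P : ∀ A : B, MorphismProperty (F.obj A)}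

theorem fiber_comp_mem (comp_mem : ∀ A, ∀ ⦃X Y Z : F.obj A⦄ (f : X ⟶ Y) (g : Y ⟶ Z),
      P A f → P A g → P A (f ≫ g))
    (iso_mem : ∀ A, ∀ ⦃X Y : F.obj A⦄ (f : X ⟶ Y), IsIso f → P A f)
    (map_mem : ∀ ⦃A A' : B⦄ (u : A ⟶ A') ⦃X Y : F.obj A⦄ (f : X ⟶ Y),
      P A f → P A' ((F.map u).toFunctor.map f))
    {X Y Z : Grothendieck F} (φ : X ⟶ Y) (ψ : Y ⟶ Z)
    (hφ : P Y.base φ.fiber) (hψ : P Z.base ψ.fiber) : P Z.base (φ ≫ ψ).fiber := by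
  rw [comp_fiber]
  exact comp_mem _ _ _ (iso_mem _ _ inferInstance)
    (comp_mem _ _ _ (map_mem ψ.base _ hφ) hψ)

end CategoryTheory.Grothendieck

section

variable {B : Type*} [Category B] {F : B ⥤ Cat} {cofB weqB : MorphismProperty B}
  {fcof fweq : ∀ A : B, MorphismProperty (F.obj A)}

theorem totalCof_comp (hB : IsWaldhausen cofB weqB)
    (hfib : ∀ A : B, IsWaldhausen (fcof A) (fweq A)) (hex : ExactReindexing F fcof fweq)
    {X Y Z : Grothendieck F} (φ : X ⟶ Y) (ψ : Y ⟶ Z)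
    (hφ : totalCof F cofB fcof φ) (hψ : totalCof F cofB fcof ψ) :
    totalCof F cofB fcof (φ ≫ ψ) :=
  ⟨hB.cof_comp _ _ hφ.1 hψ.1, Grothendieck.fiber_comp_mem (fun A => (hfib A).cof_comp)
    (fun A => (hfib A).cof_iso) hex.map_cof φ ψ hφ.2 hψ.2⟩

theorem totalWeq_comp (hB : IsWaldhausen cofB weqB)
    (hfib : ∀ A : B, IsWaldhausen (fcof A) (fweq A)) (hex : ExactReindexing F fcof fweq)
    {X Y Z : Grothendieck F} (φ : X ⟶ Y) (ψ : Y ⟶ Z)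
    (hφ : totalWeq F weqB fweq φ) (hψ : totalWeq F weqB fweq ψ) :
    totalWeq F weqB fweq (φ ≫ ψ) :=
  ⟨hB.weq_comp _ _ hφ.1 hψ.1, Grothendieck.fiber_comp_mem (fun A => (hfib A).weq_comp)
    (fun A => (hfib A).weq_iso) hex.map_weq φ ψ hφ.2 hψ.2⟩

end

/-- for a Waldhausen opfibration (presented as a functor `F : B ⥤ Cat` whose
fibers carry Waldhausen structures and whose reindexing functors are exact) over a Waldhausen
category `B`, the classes of total cofibrations and of total weak equivalences on the total
category are each closed under composition. -/
theorem total_classes_comp {B : Type u} [Category.{v} B] (F : B ⥤ Cat.{v₂, u₂})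
    (cofB weqB : MorphismProperty B)
    (fcof fweq : ∀ A : B, MorphismProperty (F.obj A))
    (hB : IsWaldhausen cofB weqB)
    (hfib : ∀ A : B, IsWaldhausen (fcof A) (fweq A))
    (hex : ExactReindexing F fcof fweq) :
    (∀ ⦃X Y Z : Grothendieck F⦄ (φ : X ⟶ Y) (ψ : Y ⟶ Z),
      totalCof F cofB fcof φ → totalCof F cofB fcof ψ → totalCof F cofB fcof (φ ≫ ψ)) ∧
    (∀ ⦃X Y Z : Grothendieck F⦄ (φ : X ⟶ Y) (ψ : Y ⟶ Z),
      totalWeq F weqB fweq φ → totalWeq F weqB fweq ψ → totalWeq F weqB fweq (φ ≫ ψ)) :=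
  ⟨fun _ _ _ => totalCof_comp hB hfib hex, fun _ _ _ => totalWeq_comp hB hfib hex⟩
end

section
/- Let p : T ⥤ B be a Waldhausen opfibration with B a Waldhausen category. Then T, equipped with total cofibrations and total weak equivalences, is a Waldhausen category. In particular: (C2) for every object X of T, the unique morphism from the initial object 0̄ of T to X is a total cofibration; (C3) pushouts of total cofibrations along arbitrary morphisms exist in T and total cofibrations are stable under such pushouts; (W2) the gluing lemma holds for total weak equivalences. -/
/-!
A morphism of the Grothendieck construction is a base morphism `u` together with a fibre
morphism `f▷` out of `u_! X`. Composites and isomorphisms are computed componentwise up to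
reindexing, and reindexing is exact, so the closure axioms hold; the initial object is
`(0, 0̄)`, whose reindexings are initial.

A pushout of a total cofibration `f` along `g` is built in two stages: push out `f.base` along
`g.base` in `B` to get `u, v` into `c`, then push out `u_!(f▷)` and `v_!(g▷)` in the fibre
over `c`. Because every reindexing `k_!` preserves this fibre pushout, cocones in the total
category (which live over the various `k : c ⟶ d`) factor uniquely through it.

Any pushout is isomorphic to such a canonical one, so the gluing lemma only needs to be checked
for canonical pushouts. There the comparison map has as base the gluing map in `B`, and as
fibre the gluing map in the fibre over `c'` between the `k`-reindexed fibre square and the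
second fibre square, so both components are weak equivalences.
-/

open CategoryTheory

universe v u v₂ u₂


theorem CategoryTheory.IsPushout.desc_eq_isoIsPushout_hom {E : Type*} [Category E]
    {A X Y A' X' Y' P P₀ P' P₀' : E} {f : A ⟶ X} {g : A ⟶ Y} {h : X ⟶ P} {i : Y ⟶ P}
    {h₀ : X ⟶ P₀} {i₀ : Y ⟶ P₀} {f' : A' ⟶ X'} {g' : A' ⟶ Y'} {h' : X' ⟶ P'}
    {i' : Y' ⟶ P'} {h₀' : X' ⟶ P₀'} {i₀' : Y' ⟶ P₀'}
    (sq : IsPushout f g h i) (sq₀ : IsPushout f g h₀ i₀) (sq' : IsPushout f' g' h' i')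
    (sq₀' : IsPushout f' g' h₀' i₀') (x : X ⟶ X') (y : Y ⟶ Y')
    (w : f ≫ x ≫ h' = g ≫ y ≫ i') (w₀ : f ≫ x ≫ h₀' = g ≫ y ≫ i₀') :
    sq.desc (x ≫ h') (y ≫ i') w =
      (sq.isoIsPushout _ _ sq₀).hom ≫ sq₀.desc (x ≫ h₀') (y ≫ i₀') w₀ ≫
        (sq₀'.isoIsPushout _ _ sq').hom :=
  sq.hom_ext (by simp) (by simp)

namespace CategoryTheory.Grothendieck

open Limits

variable {C : Type*} [Category C] {F : C ⥤ Cat}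

lemma map_obj_map_obj {a b c : C} {u : a ⟶ b} {v : b ⟶ c} {w : a ⟶ c} (h : u ≫ v = w)
    (t : F.obj a) :
    (F.map v).toFunctor.obj ((F.map u).toFunctor.obj t) = (F.map w).toFunctor.obj t := by
  subst h
  simp

lemma map_obj_map_obj_of_comm {a b b' c : C} {u : a ⟶ b} {v : b ⟶ c} {u' : a ⟶ b'}
    {v' : b' ⟶ c} (h : u ≫ v = u' ≫ v') (t : F.obj a) :
    (F.map v).toFunctor.obj ((F.map u).toFunctor.obj t) =
      (F.map v').toFunctor.obj ((F.map u').toFunctor.obj t) :=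
  (map_obj_map_obj h t).trans (map_obj_map_obj rfl t).symm

lemma map_map_map {a b c : C} {u : a ⟶ b} {v : b ⟶ c} {w : a ⟶ c} (h : u ≫ v = w)
    {s t : F.obj a} (φ : s ⟶ t) :
    (F.map v).toFunctor.map ((F.map u).toFunctor.map φ) =
      eqToHom (map_obj_map_obj h s) ≫ (F.map w).toFunctor.map φ ≫
        eqToHom (map_obj_map_obj h t).symm := by
  subst h
  simp [Functor.congr_hom (congrArg Cat.Hom.toFunctor (F.map_comp u v)) φ]

lemma map_map_map_of_comm {a b b' c : C} {u : a ⟶ b} {v : b ⟶ c} {u' : a ⟶ b'}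
    {v' : b' ⟶ c} (h : u ≫ v = u' ≫ v') {s t : F.obj a} (φ : s ⟶ t) :
    (F.map v).toFunctor.map ((F.map u).toFunctor.map φ) =
      eqToHom (map_obj_map_obj_of_comm h s) ≫ (F.map v').toFunctor.map
        ((F.map u').toFunctor.map φ) ≫ eqToHom (map_obj_map_obj_of_comm h t).symm := by
  rw [map_map_map h, map_map_map rfl]
  simp

instance isIso_base {X Y : Grothendieck F} (φ : X ⟶ Y) [IsIso φ] : IsIso φ.base :=
  inferInstanceAs (IsIso ((forget F).map φ))

instance isIso_fiber {X Y : Grothendieck F} (φ : X ⟶ Y) [IsIso φ] : IsIso φ.fiber := by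
  have hinv := Grothendieck.congr (IsIso.inv_hom_id φ)
  have hhom := Grothendieck.congr (IsIso.hom_inv_id φ)
  simp only [comp_fiber, id_fiber, eqToHom_trans, eqToHom_comp_iff] at hinv hhom
  have hY : Y.fiber =
      (F.map φ.base).toFunctor.obj ((F.map (inv φ).base).toFunctor.obj Y.fiber) := by
    simp [map_obj_map_obj (congrArg Hom.base (IsIso.inv_hom_id φ))]
  have hX : (F.map (inv φ).base).toFunctor.obj ((F.map φ.base).toFunctor.obj X.fiber) =
      X.fiber := by
    simp [map_obj_map_obj (congrArg Hom.base (IsIso.hom_inv_id φ))]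
  have : IsSplitEpi φ.fiber :=
    ⟨⟨eqToHom hY ≫ _, by rw [Category.assoc, hinv, eqToHom_trans, eqToHom_refl]⟩⟩
  have : IsSplitMono ((F.map (inv φ).base).toFunctor.map φ.fiber) :=
    ⟨⟨_ ≫ eqToHom hX.symm, by rw [← Category.assoc, hhom, eqToHom_trans, eqToHom_refl]⟩⟩
  have : (F.map (inv φ).base).toFunctor.Faithful :=
    (Cat.equivOfIso (F.mapIso (asIso (inv φ).base))).faithful_functor
  have : Mono φ.fiber := (F.map (inv φ).base).toFunctor.mono_of_mono_map inferInstance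
  exact isIso_of_mono_of_isSplitEpi _

lemma isInitial_mk {c : C} (hc : IsInitial c) {t : F.obj c}
    (ht : ∀ ⦃d : C⦄ (u : c ⟶ d), Nonempty (IsInitial ((F.map u).toFunctor.obj t))) :
    Nonempty (IsInitial (mk c t)) :=
  ⟨IsInitial.ofUniqueHom (fun Z => ⟨hc.to Z.base, (ht _).some.to Z.fiber⟩)
    (fun _ _ => Grothendieck.ext _ _ (hc.hom_ext _ _) ((ht _).some.hom_ext _ _))⟩

lemma comp_eq_iff {X Y Z : Grothendieck F} (φ : X ⟶ Y) (ψ : Y ⟶ Z) (p : X ⟶ Z)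
    (h : φ.base ≫ ψ.base = p.base) :
    φ ≫ ψ = p ↔ (F.map ψ.base).toFunctor.map φ.fiber ≫ ψ.fiber =
      eqToHom (map_obj_map_obj h X.fiber) ≫ p.fiber := by
  constructor
  · rintro rfl
    rw [comp_fiber, eqToHom_trans_assoc, eqToHom_refl, Category.id_comp]
  · intro hf
    refine Grothendieck.ext _ _ h ?_
    rw [comp_fiber, hf, eqToHom_trans_assoc, eqToHom_trans_assoc, eqToHom_refl,
      Category.id_comp]

lemma base_comp_base_eq {A X Y Z : Grothendieck F} {f : A ⟶ X} {x : X ⟶ Z} {g : A ⟶ Y}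
    {y : Y ⟶ Z} (sq : f ≫ x = g ≫ y) : f.base ≫ x.base = g.base ≫ y.base :=
  congrArg Hom.base sq

/-- `u_!(φ▷)` with its source written as `w_! X`: fixing `w` lets both legs of a fibre span
start at the same object, `F` being functorial only up to `eqToHom`. -/
def fiberAlong {X Y : Grothendieck F} (φ : X ⟶ Y) {c : C} (u : Y.base ⟶ c) {w : X.base ⟶ c}
    (h : φ.base ≫ u = w) :
    (F.map w).toFunctor.obj X.fiber ⟶ (F.map u).toFunctor.obj Y.fiber :=
  eqToHom (map_obj_map_obj h X.fiber).symm ≫ (F.map u).toFunctor.map φ.fiber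

lemma map_fiberAlong_comp {X Y Z : Grothendieck F} (φ : X ⟶ Y) (p : Y ⟶ Z) {c : C}
    {u : Y.base ⟶ c} {w : X.base ⟶ c} (h : φ.base ≫ u = w) {k : c ⟶ Z.base}
    (hp : u ≫ k = p.base) :
    (F.map k).toFunctor.map (fiberAlong φ u h) ≫ eqToHom (map_obj_map_obj hp Y.fiber) ≫
        p.fiber =
      eqToHom (map_obj_map_obj_of_comm (by rw [← h, Category.assoc, hp]) X.fiber) ≫
        (F.map p.base).toFunctor.map φ.fiber ≫ p.fiber := by
  simp only [fiberAlong, Functor.map_comp, eqToHom_map, map_map_map hp, Category.assoc]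
  rw [eqToHom_trans_assoc, eqToHom_trans_assoc, eqToHom_refl, Category.id_comp]

lemma map_fiberAlong_comp_eq_of_comm {A X Y Z : Grothendieck F} {f : A ⟶ X} {g : A ⟶ Y}
    {p : X ⟶ Z} {q : Y ⟶ Z} (hpq : f ≫ p = g ≫ q) {c : C} {u : X.base ⟶ c}
    {v : Y.base ⟶ c}
    {w : A.base ⟶ c} (hf : f.base ≫ u = w) (hg : g.base ≫ v = w) {k : c ⟶ Z.base}
    (hp : u ≫ k = p.base) (hq : v ≫ k = q.base) :
    (F.map k).toFunctor.map (fiberAlong f u hf) ≫ eqToHom (map_obj_map_obj hp X.fiber) ≫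
        p.fiber =
      (F.map k).toFunctor.map (fiberAlong g v hg) ≫ eqToHom (map_obj_map_obj hq Y.fiber) ≫
        q.fiber := by
  have hfib := Grothendieck.congr hpq
  rw [comp_fiber, comp_fiber, eqToHom_comp_iff] at hfib
  rw [map_fiberAlong_comp f p hf hp, map_fiberAlong_comp g q hg hq, hfib]
  repeat rw [eqToHom_trans_assoc]

theorem isPushout_mk {A X Y : Grothendieck F} (f : A ⟶ X) (g : A ⟶ Y) {c : C}
    {u : X.base ⟶ c} {v : Y.base ⟶ c} (sqB : IsPushout f.base g.base u v) {Q : F.obj c}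
    {s : (F.map u).toFunctor.obj X.fiber ⟶ Q} {t : (F.map v).toFunctor.obj Y.fiber ⟶ Q}
    (w : fiberAlong f u rfl ≫ s = fiberAlong g v sqB.w.symm ≫ t)
    (hQ : ∀ ⦃d : C⦄ (k : c ⟶ d), IsPushout
      ((F.map k).toFunctor.map (fiberAlong f u rfl))
      ((F.map k).toFunctor.map (fiberAlong g v sqB.w.symm))
      ((F.map k).toFunctor.map s) ((F.map k).toFunctor.map t)) :
    IsPushout f g (⟨u, s⟩ : X ⟶ mk c Q) (⟨v, t⟩ : Y ⟶ mk c Q) := by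
  have hw : f ≫ (⟨u, s⟩ : X ⟶ mk c Q) = g ≫ ⟨v, t⟩ := by
    refine Grothendieck.ext _ _ sqB.w ?_
    simp only [fiberAlong, Category.assoc] at w
    rw [eqToHom_comp_iff] at w
    rw [comp_fiber, comp_fiber, w]
    repeat rw [eqToHom_trans_assoc]
  let k (σ : PushoutCocone f g) : c ⟶ σ.pt.base :=
    sqB.desc _ _ (base_comp_base_eq σ.condition)
  have hk₁ (σ : PushoutCocone f g) : u ≫ k σ = σ.inl.base := sqB.inl_desc _ _ _
  have hk₂ (σ : PushoutCocone f g) : v ≫ k σ = σ.inr.base := sqB.inr_desc _ _ _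
  have hσ (σ : PushoutCocone f g) :=
    map_fiberAlong_comp_eq_of_comm σ.condition rfl sqB.w.symm (hk₁ σ) (hk₂ σ)
  refine .of_isColimit (PushoutCocone.IsColimit.mk hw
    (fun σ => ⟨k σ, (hQ (k σ)).desc _ _ (hσ σ)⟩)
    (fun σ => (comp_eq_iff _ _ _ (hk₁ σ)).2 ((hQ (k σ)).inl_desc _ _ (hσ σ)))
    (fun σ => (comp_eq_iff _ _ _ (hk₂ σ)).2 ((hQ (k σ)).inr_desc _ _ (hσ σ))) ?_)
  rintro σ ⟨m, φ⟩ hm₁ hm₂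
  obtain rfl : m = k σ := sqB.hom_ext ((congrArg Hom.base hm₁).trans (hk₁ σ).symm)
    ((congrArg Hom.base hm₂).trans (hk₂ σ).symm)
  refine Grothendieck.ext _ _ rfl ?_
  rw [eqToHom_refl, Category.id_comp]
  exact (hQ _).hom_ext (((comp_eq_iff _ _ _ (hk₁ σ)).1 hm₁).trans ((hQ _).inl_desc _ _ _).symm)
    (((comp_eq_iff _ _ _ (hk₂ σ)).1 hm₂).trans ((hQ _).inr_desc _ _ _).symm)

lemma map_fiberAlong_comp_map_fiber {A X A' X' : Grothendieck F} {f : A ⟶ X} {x : X ⟶ X'}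
    {a : A ⟶ A'} {f' : A' ⟶ X'} (sq : f ≫ x = a ≫ f') {c c' : C} {u : X.base ⟶ c}
    {u' : X'.base ⟶ c'} {w : A.base ⟶ c} {w' : A'.base ⟶ c'} (hf : f.base ≫ u = w)
    (hf' : f'.base ≫ u' = w') {k : c ⟶ c'} (hk : u ≫ k = x.base ≫ u')
    (ha : w ≫ k = a.base ≫ w') :
    (F.map k).toFunctor.map (fiberAlong f u hf) ≫
        eqToHom (map_obj_map_obj_of_comm hk X.fiber) ≫ (F.map u').toFunctor.map x.fiber =
      (eqToHom (map_obj_map_obj_of_comm ha A.fiber) ≫ (F.map w').toFunctor.map a.fiber) ≫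
        fiberAlong f' u' hf' := by
  subst hf hf'
  have hfib := congrArg (F.map u').toFunctor.map (Grothendieck.congr sq)
  simp only [comp_fiber, Functor.map_comp, eqToHom_map] at hfib
  rw [eqToHom_comp_iff] at hfib
  have ha' := (map_map_map (rfl : f'.base ≫ u' = _) a.fiber).symm
  rw [eqToHom_comp_iff, comp_eqToHom_iff] at ha'
  simp only [fiberAlong, Functor.map_comp, eqToHom_map, map_map_map_of_comm hk, ha',
    Category.assoc]
  repeat rw [eqToHom_trans_assoc]
  simp only [eqToHom_refl, Category.id_comp]
  rw [hfib]
  repeat rw [eqToHom_trans_assoc]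

end CategoryTheory.Grothendieck

section Total

open Limits Grothendieck

variable {E : Type*} [Category E] {cof weq : MorphismProperty E}

theorem IsWaldhausen.cof_eqToHom_comp (h : IsWaldhausen cof weq) {X Y Z : E} (e : X = Y)
    {f : Y ⟶ Z} (hf : cof f) : cof (eqToHom e ≫ f) :=
  h.cof_comp _ _ (h.cof_iso _ inferInstance) hf

theorem IsWaldhausen.weq_eqToHom_comp (h : IsWaldhausen cof weq) {X Y Z : E} (e : X = Y)
    {f : Y ⟶ Z} (hf : weq f) : weq (eqToHom e ≫ f) :=
  h.weq_comp _ _ (h.weq_iso _ inferInstance) hf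

variable {B : Type u} [Category.{v} B] {F : B ⥤ Cat.{v₂, u₂}}

-- Stated for `totalCof`; `totalWeq F P Q` unfolds to the same predicate, so these also serve
-- weak equivalences.
theorem totalCof_comp_s16 {P : MorphismProperty B} {Q : ∀ A : B, MorphismProperty (F.obj A)}
    (hP : ∀ ⦃X Y Z : B⦄ (f : X ⟶ Y) (g : Y ⟶ Z), P f → P g → P (f ≫ g))
    (hQ : ∀ A ⦃X Y Z : F.obj A⦄ (f : X ⟶ Y) (g : Y ⟶ Z),
      Q A f → Q A g → Q A (f ≫ g))
    (hQiso : ∀ A ⦃X Y : F.obj A⦄ (f : X ⟶ Y), IsIso f → Q A f)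
    (hmap : ∀ ⦃A A' : B⦄ (u : A ⟶ A') ⦃X Y : F.obj A⦄ (f : X ⟶ Y),
      Q A f → Q A' ((F.map u).toFunctor.map f))
    ⦃X Y Z : Grothendieck F⦄ (φ : X ⟶ Y) (ψ : Y ⟶ Z) :
    totalCof F P Q φ → totalCof F P Q ψ → totalCof F P Q (φ ≫ ψ) := by
  refine fun hφ hψ => ⟨hP _ _ hφ.1 hψ.1, ?_⟩
  rw [comp_fiber]
  exact hQ _ _ _ (hQiso _ _ inferInstance) (hQ _ _ _ (hmap ψ.base φ.fiber hφ.2) hψ.2)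

theorem totalCof_of_isIso {P : MorphismProperty B} {Q : ∀ A : B, MorphismProperty (F.obj A)}
    (hP : ∀ ⦃X Y : B⦄ (f : X ⟶ Y), IsIso f → P f)
    (hQ : ∀ A ⦃X Y : F.obj A⦄ (f : X ⟶ Y), IsIso f → Q A f)
    ⦃X Y : Grothendieck F⦄ (φ : X ⟶ Y) [IsIso φ] : totalCof F P Q φ :=
  ⟨hP _ inferInstance, hQ _ _ inferInstance⟩

variable {cofB weqB : MorphismProperty B} {fcof fweq : ∀ A : B, MorphismProperty (F.obj A)}

theorem exists_isInitial_total (hB : IsWaldhausen cofB weqB)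
    (hfib : ∀ A : B, IsWaldhausen (fcof A) (fweq A)) (hex : ExactReindexing F fcof fweq) :
    ∃ O : Grothendieck F, Nonempty (IsInitial O) ∧
      ∀ X (φ : O ⟶ X), totalCof F cofB fcof φ := by
  obtain ⟨OB, ⟨hOB⟩⟩ := hB.has_initial
  obtain ⟨OF, ⟨hOF⟩⟩ := (hfib OB).has_initial
  exact ⟨mk OB OF, isInitial_mk hOB fun _ u => hex.map_initial u OF hOF, fun X φ =>
    ⟨hB.cof_initial hOB _, (hfib X.base).cof_initial (hex.map_initial _ OF hOF).some _⟩⟩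

theorem totalCof_of_isInitial (hB : IsWaldhausen cofB weqB)
    (hfib : ∀ A : B, IsWaldhausen (fcof A) (fweq A)) (hex : ExactReindexing F fcof fweq)
    ⦃O X : Grothendieck F⦄ (hO : IsInitial O) (φ : O ⟶ X) : totalCof F cofB fcof φ := by
  obtain ⟨O₀, ⟨hO₀⟩, hcof⟩ := exists_isInitial_total hB hfib hex
  rw [← (hO.uniqueUpToIso hO₀).hom_inv_id_assoc φ]
  exact totalCof_comp_s16 hB.cof_comp (fun A => (hfib A).cof_comp) (fun A => (hfib A).cof_iso)
    hex.map_cof _ _ (totalCof_of_isIso hB.cof_iso (fun A => (hfib A).cof_iso) _) (hcof _ _)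

theorem cof_fiberAlong (hfib : ∀ A : B, IsWaldhausen (fcof A) (fweq A))
    (hex : ExactReindexing F fcof fweq) {X Y : Grothendieck F} {φ : X ⟶ Y}
    (hφ : fcof Y.base φ.fiber) {c : B} (u : Y.base ⟶ c) {w : X.base ⟶ c}
    (h : φ.base ≫ u = w) : fcof c (fiberAlong φ u h) :=
  (hfib c).cof_eqToHom_comp _ (hex.map_cof u _ hφ)

theorem isPushout_mk_of_cof (hex : ExactReindexing F fcof fweq) {A X Y : Grothendieck F}
    (f : A ⟶ X) (g : A ⟶ Y) {c : B} {u : X.base ⟶ c} {v : Y.base ⟶ c}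
    (sqB : IsPushout f.base g.base u v) {Q : F.obj c}
    {s : (F.map u).toFunctor.obj X.fiber ⟶ Q} {t : (F.map v).toFunctor.obj Y.fiber ⟶ Q}
    (hf : fcof c (fiberAlong f u rfl))
    (sqQ : IsPushout (fiberAlong f u rfl) (fiberAlong g v sqB.w.symm) s t) :
    IsPushout f g (⟨u, s⟩ : X ⟶ mk c Q) (⟨v, t⟩ : Y ⟶ mk c Q) :=
  isPushout_mk f g sqB sqQ.w fun _ k => hex.map_pushout k _ _ _ _ hf sqQ

theorem exists_isPushout_fiber (hB : IsWaldhausen cofB weqB)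
    (hfib : ∀ A : B, IsWaldhausen (fcof A) (fweq A)) (hex : ExactReindexing F fcof fweq)
    {A X Y : Grothendieck F} (f : A ⟶ X) (g : A ⟶ Y) (hf : totalCof F cofB fcof f) :
    ∃ (c : B) (u : X.base ⟶ c) (v : Y.base ⟶ c) (sqB : IsPushout f.base g.base u v)
      (Q : F.obj c) (s : (F.map u).toFunctor.obj X.fiber ⟶ Q)
      (t : (F.map v).toFunctor.obj Y.fiber ⟶ Q),
      IsPushout (fiberAlong f u rfl) (fiberAlong g v sqB.w.symm) s t ∧ cofB v ∧ fcof c t := by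
  obtain ⟨c, u, v, sqB, hv⟩ := hB.cof_pushout f.base g.base hf.1
  obtain ⟨Q, s, t, sqQ, ht⟩ := (hfib c).cof_pushout _ (fiberAlong g v sqB.w.symm)
    (cof_fiberAlong hfib hex hf.2 u rfl)
  exact ⟨c, u, v, sqB, Q, s, t, sqQ, hv, ht⟩

theorem exists_isPushout_totalCof (hB : IsWaldhausen cofB weqB)
    (hfib : ∀ A : B, IsWaldhausen (fcof A) (fweq A)) (hex : ExactReindexing F fcof fweq)
    ⦃A X Y : Grothendieck F⦄ (f : A ⟶ X) (g : A ⟶ Y) (hf : totalCof F cofB fcof f) :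
    ∃ (P : Grothendieck F) (h : X ⟶ P) (i : Y ⟶ P),
      IsPushout f g h i ∧ totalCof F cofB fcof i := by
  obtain ⟨c, u, v, sqB, Q, s, t, sqQ, hv, ht⟩ := exists_isPushout_fiber hB hfib hex f g hf
  exact ⟨mk c Q, ⟨u, s⟩, ⟨v, t⟩,
    isPushout_mk_of_cof hex f g sqB (cof_fiberAlong hfib hex hf.2 u rfl) sqQ, hv, ht⟩

theorem totalWeq_desc_mk (hB : IsWaldhausen cofB weqB)
    (hfib : ∀ A : B, IsWaldhausen (fcof A) (fweq A)) (hex : ExactReindexing F fcof fweq)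
    {A X Y A' X' Y' : Grothendieck F} {f : A ⟶ X} {g : A ⟶ Y} {f' : A' ⟶ X'} {g' : A' ⟶ Y'}
    {a : A ⟶ A'} {x : X ⟶ X'} {y : Y ⟶ Y'}
    (hf : totalCof F cofB fcof f) (hf' : totalCof F cofB fcof f')
    (ha : totalWeq F weqB fweq a) (hx : totalWeq F weqB fweq x) (hy : totalWeq F weqB fweq y)
    (hfx : f ≫ x = a ≫ f') (hgy : g ≫ y = a ≫ g')
    {c : B} {u : X.base ⟶ c} {v : Y.base ⟶ c} (sqB : IsPushout f.base g.base u v) {Q : F.obj c}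
    {s : (F.map u).toFunctor.obj X.fiber ⟶ Q} {t : (F.map v).toFunctor.obj Y.fiber ⟶ Q}
    (sqQ : IsPushout (fiberAlong f u rfl) (fiberAlong g v sqB.w.symm) s t)
    {c' : B} {u' : X'.base ⟶ c'} {v' : Y'.base ⟶ c'} (sqB' : IsPushout f'.base g'.base u' v')
    {Q' : F.obj c'}
    {s' : (F.map u').toFunctor.obj X'.fiber ⟶ Q'} {t' : (F.map v').toFunctor.obj Y'.fiber ⟶ Q'}
    (sqQ' : IsPushout (fiberAlong f' u' rfl) (fiberAlong g' v' sqB'.w.symm) s' t')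
    (sq : IsPushout f g (⟨u, s⟩ : X ⟶ mk c Q) (⟨v, t⟩ : Y ⟶ mk c Q))
    (w : f ≫ x ≫ (⟨u', s'⟩ : X' ⟶ mk c' Q') =
      g ≫ y ≫ (⟨v', t'⟩ : Y' ⟶ mk c' Q')) :
    totalWeq F weqB fweq (sq.desc _ _ w) := by
  set D := sq.desc _ _ w
  have hD₁ : (⟨u, s⟩ : X ⟶ mk c Q) ≫ D = x ≫ ⟨u', s'⟩ := sq.inl_desc _ _ _
  have hD₂ : (⟨v, t⟩ : Y ⟶ mk c Q) ≫ D = y ≫ ⟨v', t'⟩ := sq.inr_desc _ _ _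
  have hk₁ : u ≫ D.base = x.base ≫ u' := base_comp_base_eq hD₁
  have hk₂ : v ≫ D.base = y.base ≫ v' := base_comp_base_eq hD₂
  refine ⟨?_, ?_⟩
  · have hw : f.base ≫ x.base ≫ u' = g.base ≫ y.base ≫ v' := base_comp_base_eq w
    rw [show D.base = sqB.desc _ _ hw from
      sqB.hom_ext (hk₁.trans (sqB.inl_desc _ _ _).symm) (hk₂.trans (sqB.inr_desc _ _ _).symm)]
    exact hB.gluing _ _ _ _ _ _ _ _ _ _ _ hf.1 hf'.1 ha.1 hx.1 hy.1 (base_comp_base_eq hfx)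
      (base_comp_base_eq hgy) sqB sqB' hw
  · have hak : (f.base ≫ u) ≫ D.base = a.base ≫ f'.base ≫ u' := by
      rw [Category.assoc, hk₁, reassoc_of% (base_comp_base_eq hfx)]
    have comm₁ := map_fiberAlong_comp_map_fiber hfx rfl rfl hk₁ hak
    have comm₂ := map_fiberAlong_comp_map_fiber hgy sqB.w.symm sqB'.w.symm hk₂ hak
    have psq := hex.map_pushout D.base _ _ _ _ (cof_fiberAlong hfib hex hf.2 u rfl) sqQ
    have hglue := (hfib c').gluing _ _ _ _ _ _ _ _ _ _ _
      (hex.map_cof _ _ (cof_fiberAlong hfib hex hf.2 u rfl))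
      (cof_fiberAlong hfib hex hf'.2 u' rfl)
      ((hfib c').weq_eqToHom_comp _ (hex.map_weq _ _ ha.2))
      ((hfib c').weq_eqToHom_comp _ (hex.map_weq _ _ hx.2))
      ((hfib c').weq_eqToHom_comp _ (hex.map_weq _ _ hy.2)) comm₁ comm₂ psq sqQ'
      (by rw [← Category.assoc, comm₁, ← Category.assoc, comm₂, Category.assoc, sqQ'.w]
          simp only [Category.assoc])
    convert hglue using 1
    refine psq.hom_ext ?_ ?_
    · rw [(comp_eq_iff _ _ _ hk₁).1 hD₁, psq.inl_desc, comp_fiber, eqToHom_trans_assoc,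
        Category.assoc]
    · rw [(comp_eq_iff _ _ _ hk₂).1 hD₂, psq.inr_desc, comp_fiber, eqToHom_trans_assoc,
        Category.assoc]

theorem totalWeq_gluing (hB : IsWaldhausen cofB weqB)
    (hfib : ∀ A : B, IsWaldhausen (fcof A) (fweq A)) (hex : ExactReindexing F fcof fweq)
    ⦃A X Y A' X' Y' P P' : Grothendieck F⦄
    (f : A ⟶ X) (g : A ⟶ Y) (h : X ⟶ P) (i : Y ⟶ P)
    (f' : A' ⟶ X') (g' : A' ⟶ Y') (h' : X' ⟶ P') (i' : Y' ⟶ P')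
    (a : A ⟶ A') (x : X ⟶ X') (y : Y ⟶ Y')
    (hf : totalCof F cofB fcof f) (hf' : totalCof F cofB fcof f') (ha : totalWeq F weqB fweq a)
    (hx : totalWeq F weqB fweq x) (hy : totalWeq F weqB fweq y)
    (hfx : f ≫ x = a ≫ f') (hgy : g ≫ y = a ≫ g')
    (sq : IsPushout f g h i) (sq' : IsPushout f' g' h' i') (w : f ≫ x ≫ h' = g ≫ y ≫ i') :
    totalWeq F weqB fweq (sq.desc (x ≫ h') (y ≫ i') w) := by
  obtain ⟨c, u, v, sqB, Q, s, t, sqQ, -⟩ := exists_isPushout_fiber hB hfib hex f g hf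
  obtain ⟨c', u', v', sqB', Q', s', t', sqQ', -⟩ :=
    exists_isPushout_fiber hB hfib hex f' g' hf'
  have sq₀ := isPushout_mk_of_cof hex f g sqB (cof_fiberAlong hfib hex hf.2 u rfl) sqQ
  have sq₀' := isPushout_mk_of_cof hex f' g' sqB' (cof_fiberAlong hfib hex hf'.2 u' rfl) sqQ'
  have w₀ : f ≫ x ≫ (⟨u', s'⟩ : X' ⟶ mk c' Q') = g ≫ y ≫ ⟨v', t'⟩ := by
    rw [reassoc_of% hfx, reassoc_of% hgy, sq₀'.w]
  have weq_comp := totalCof_comp_s16 hB.weq_comp (fun A => (hfib A).weq_comp)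
    (fun A => (hfib A).weq_iso) hex.map_weq
  have weq_iso := totalCof_of_isIso hB.weq_iso (fun A => (hfib A).weq_iso)
  rw [sq.desc_eq_isoIsPushout_hom sq₀ sq' sq₀' x y w w₀]
  exact weq_comp _ _ (weq_iso _) (weq_comp _ _
    (totalWeq_desc_mk hB hfib hex hf hf' ha hx hy hfx hgy sqB sqQ sqB' sqQ' sq₀ w₀) (weq_iso _))

end Total

/-- for a Waldhausen opfibration (presented as a functor `F : B ⥤ Cat` whose
fibers carry Waldhausen structures and whose reindexing functors are exact) over a Waldhausen
category `B`, the total category (the Grothendieck construction of `F`) equipped with total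
cofibrations and total weak equivalences is a Waldhausen category. -/
theorem total_isWaldhausen {B : Type u} [Category.{v} B] (F : B ⥤ Cat.{v₂, u₂})
    (cofB weqB : MorphismProperty B)
    (fcof fweq : ∀ A : B, MorphismProperty (F.obj A))
    (hB : IsWaldhausen cofB weqB)
    (hfib : ∀ A : B, IsWaldhausen (fcof A) (fweq A))
    (hex : ExactReindexing F fcof fweq) :
    IsWaldhausen (totalCof F cofB fcof) (totalWeq F weqB fweq) := by
  obtain ⟨O, hO, -⟩ := exists_isInitial_total hB hfib hex
  exact
    { has_initial := ⟨O, hO⟩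
      cof_comp := totalCof_comp_s16 hB.cof_comp (fun A => (hfib A).cof_comp)
        (fun A => (hfib A).cof_iso) hex.map_cof
      weq_comp := totalCof_comp_s16 hB.weq_comp (fun A => (hfib A).weq_comp)
        (fun A => (hfib A).weq_iso) hex.map_weq
      cof_iso := fun _ _ φ _ => totalCof_of_isIso hB.cof_iso (fun A => (hfib A).cof_iso) φ
      weq_iso := fun _ _ φ _ => totalCof_of_isIso hB.weq_iso (fun A => (hfib A).weq_iso) φ
      cof_initial := totalCof_of_isInitial hB hfib hex
      cof_pushout := exists_isPushout_totalCof hB hfib hex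
      gluing := totalWeq_gluing hB hfib hex }
end

section
/- A quiver Q is left rooted (i.e. V_ζ = V for some ordinal ζ, for the transfinite sequence V_μ defined below) if and only if there is no infinite sequence of arrows of the form ⋯ ⟶ • ⟶ • ⟶ • in Q (vertices not necessarily distinct). -/
open CategoryTheory Classical

universe w v u

/-- The transfinite sequence `V_μ` of subsets of the vertices of a quiver `Q`:
`V_0 = ∅`; `V_{μ+1}` consists of the vertices `i` that are not the target of any arrow `α`
with `s(α) ∉ ⋃_{γ ≤ μ} V_γ` (equivalently, every arrow into `i` has source in
`⋃_{γ < μ+1} V_γ`); and `V_μ = ⋃_{γ < μ} V_γ` for limit ordinals `μ`. -/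
noncomputable def VSeq (Q : Type u) [Quiver.{v} Q] : Ordinal.{w} → Set Q :=
  WellFounded.fix Ordinal.lt_wf (fun μ ih =>
    if μ = 0 then ∅
    else if ∃ ν : Ordinal.{w}, μ = Order.succ ν then
      { i : Q | ∀ ⦃j : Q⦄, (j ⟶ i) → ∃ γ, ∃ hγ : γ < μ, j ∈ ih γ hγ }
    else ⋃ (γ : Ordinal.{w}) (hγ : γ < μ), ih γ hγ)

/-- A quiver is left rooted if `V_ζ` is the whole vertex set for some ordinal `ζ`. -/
def LeftRooted (Q : Type u) [Quiver.{v} Q] : Prop :=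
  ∃ ζ : Ordinal.{max u v}, VSeq Q ζ = (Set.univ : Set Q)

/-! A vertex lies in some `V_μ` exactly when it is accessible for the relation "there is an
arrow `j ⟶ i`": arrows into a vertex of `V_μ` come from strictly earlier levels, and conversely an
accessible vertex enters at the successor of the supremum of the levels of its in-neighbours.
So `Q` is left rooted iff this relation is well founded, i.e. has no infinite descending chain. -/

section VSeq

variable (Q : Type u) [Quiver.{v} Q]

def HasArrow (a b : Q) : Prop := Nonempty (a ⟶ b)

lemma VSeq_eq (μ : Ordinal.{w}) :
    VSeq Q μ = if μ = 0 then ∅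
    else if ∃ ν : Ordinal.{w}, μ = Order.succ ν then
      { i : Q | ∀ ⦃j : Q⦄, (j ⟶ i) → ∃ γ, ∃ _ : γ < μ, j ∈ VSeq Q γ }
    else ⋃ (γ : Ordinal.{w}) (_ : γ < μ), VSeq Q γ := by
  rw [VSeq, WellFounded.fix_eq]

variable {Q}

lemma exists_lt_mem_VSeq_of_hom {μ : Ordinal.{w}} {i j : Q} (hi : i ∈ VSeq Q μ) (a : j ⟶ i) :
    ∃ γ < μ, j ∈ VSeq Q γ := by
  induction μ using WellFoundedLT.induction generalizing i j with
  | _ μ ih =>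
    rw [VSeq_eq] at hi
    split_ifs at hi
    · exact absurd hi (Set.notMem_empty i)
    · obtain ⟨γ, hγ, hj⟩ := hi a
      exact ⟨γ, hγ, hj⟩
    · obtain ⟨γ, hγ, hiγ⟩ := Set.mem_iUnion₂.mp hi
      obtain ⟨δ, hδ, hj⟩ := ih γ hγ hiγ a
      exact ⟨δ, hδ.trans hγ, hj⟩

lemma mem_VSeq_succ_of_forall_hom {s : Ordinal.{w}} {i : Q}
    (h : ∀ ⦃j : Q⦄, (j ⟶ i) → ∃ γ ≤ s, j ∈ VSeq Q γ) :
    i ∈ VSeq Q (Order.succ s) := by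
  have hs : Order.succ s ≠ 0 := Order.succ_ne_bot s
  rw [VSeq_eq, if_neg hs, if_pos ⟨s, rfl⟩]
  intro j a
  obtain ⟨γ, hγ, hj⟩ := h a
  exact ⟨γ, Order.lt_succ_of_le hγ, hj⟩

lemma mem_VSeq_succ_of_mem_of_le {μ s : Ordinal.{w}} (hμ : μ ≤ s) {i : Q}
    (hi : i ∈ VSeq Q μ) : i ∈ VSeq Q (Order.succ s) :=
  mem_VSeq_succ_of_forall_hom fun _ a =>
    let ⟨γ, hγ, hj⟩ := exists_lt_mem_VSeq_of_hom hi a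
    ⟨γ, hγ.le.trans hμ, hj⟩

lemma acc_hasArrow_of_mem_VSeq {μ : Ordinal.{w}} {i : Q} (hi : i ∈ VSeq Q μ) :
    Acc (HasArrow Q) i := by
  induction μ using WellFoundedLT.induction generalizing i with
  | _ μ ih =>
    refine ⟨_, fun j ⟨a⟩ => ?_⟩
    obtain ⟨γ, hγ, hj⟩ := exists_lt_mem_VSeq_of_hom hi a
    exact ih γ hγ hj

lemma exists_mem_VSeq_of_acc {i : Q} (hi : Acc (HasArrow Q) i) :
    ∃ μ : Ordinal.{max u w}, i ∈ VSeq Q μ := by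
  induction hi with
  | intro i _ ih =>
    choose rank hrank using fun j : {j : Q // HasArrow Q j i} => ih j.1 j.2
    exact ⟨Order.succ (⨆ j, rank j), mem_VSeq_succ_of_forall_hom fun j a =>
      ⟨rank ⟨j, ⟨a⟩⟩, Ordinal.le_iSup rank _, hrank _⟩⟩

lemma leftRooted_iff_wellFounded : LeftRooted Q ↔ WellFounded (HasArrow Q) := by
  refine ⟨fun ⟨ζ, hζ⟩ => ⟨fun i => acc_hasArrow_of_mem_VSeq (hζ ▸ Set.mem_univ i)⟩, fun h => ?_⟩
  choose rank hrank using fun i =>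
    (exists_mem_VSeq_of_acc (h.apply i) : ∃ μ : Ordinal.{max u v}, i ∈ VSeq Q μ)
  exact ⟨Order.succ (⨆ i, rank i), Set.eq_univ_of_forall fun i =>
    mem_VSeq_succ_of_mem_of_le (Ordinal.le_iSup rank i) (hrank i)⟩

end VSeq

/-- a quiver `Q` is left rooted if and only if there is no infinite sequence of
arrows of the form `⋯ ⟶ • ⟶ • ⟶ •` in `Q`. -/
theorem leftRooted_iff_no_infinite_chain (Q : Type u) [Quiver.{v} Q] :
    LeftRooted Q ↔ ¬ ∃ f : ℕ → Q, ∀ n : ℕ, Nonempty (f (n + 1) ⟶ f n) := by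
  rw [leftRooted_iff_wellFounded, wellFounded_iff_isEmpty_descending_chain, isEmpty_subtype,
    not_exists]
  rfl
end
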